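/- Let A be a unital C*-algebra over ℂ and α a *-automorphism of A. Then α is uniquely ergodic (i.e. there is exactly one state φ of A with φ ∘ α = φ) if and only if for every a ∈ A the ergodic averages Aₙ(a) = (1/n)·∑_{k=0}^{n-1} αᵏ(a) converge in norm to a scalar multiple of the identity. Moreover, in this case the unique α-invariant state φ satisfies Aₙ(a) → φ(a)·1 in norm for every a ∈ A. -/

import Mathlib

/-!
Averaging a unital contractive functional `ρ` along the ergodic averages gives unital
contractive functionals `ρ ∘ Aₙ`, and every weak-* cluster point `ψ` of them along `n → ∞` is
`T`-invariant, because `Aₙ (T a) - Aₙ a = (Tⁿ a - a) / n → 0`. On a C*-algebra a unital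
functional of norm at most one is a state, so `ψ` is an invariant state; in particular invariant
states exist. If every `Aₙ a` converges to some `c(a) • 1`, an invariant state `φ` satisfies
`φ a = φ (Aₙ a) → c(a)`, so it is unique. Conversely, if `Aₙ a` stays `ε`-far from `φ(a) • 1` along
a subsequence, pick unital contractive `ρₙ` with `‖Aₙ a - φ(a) • 1‖ ≤ 2 ‖ρₙ (Aₙ a - φ(a) • 1)‖`
(by extending a character of the commutative C*-algebra generated by the real or the imaginary
part); a cluster point of `ρₙ ∘ Aₙ` along that subsequence is then an invariant state different
from `φ`.
-/

open scoped ComplexOrder ComplexStarModule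
open Filter Topology Finset Complex

namespace ContinuousLinearMap

variable {𝕜 E F : Type*} [RCLike 𝕜] [NormedAddCommGroup E] [NormedSpace 𝕜 E]
  [NormedAddCommGroup F] [NormedSpace 𝕜 F] (T : E →L[𝕜] E)

noncomputable def ergodicAverage (n : ℕ) : E →L[𝕜] E := (n : 𝕜)⁻¹ • ∑ k ∈ range n, T ^ k

theorem ergodicAverage_apply (n : ℕ) (x : E) :
    T.ergodicAverage n x = (n : 𝕜)⁻¹ • ∑ k ∈ range n, (⇑T)^[k] x := by
  simp [ergodicAverage]

theorem inv_natCast_smul_sum_range_const {n : ℕ} (hn : n ≠ 0) (y : F) :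
    (n : 𝕜)⁻¹ • ∑ _k ∈ range n, y = y := by
  rw [sum_const, card_range, ← Nat.cast_smul_eq_nsmul 𝕜, smul_smul,
    inv_mul_cancel₀ (by exact_mod_cast hn), one_smul]

variable {T}

theorem norm_iterate_apply_le (hT : ‖T‖ ≤ 1) (k : ℕ) (x : E) : ‖(⇑T)^[k] x‖ ≤ ‖x‖ := by
  induction k with
  | zero => rfl
  | succ k ih =>
    rw [Function.iterate_succ_apply']
    exact (T.le_of_opNorm_le hT _).trans (by rw [one_mul]; exact ih)

theorem norm_ergodicAverage_le (hT : ‖T‖ ≤ 1) (n : ℕ) : ‖T.ergodicAverage n‖ ≤ 1 := by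
  refine opNorm_le_bound _ zero_le_one fun x => ?_
  rcases Nat.eq_zero_or_pos n with rfl | hn
  · simp [ergodicAverage]
  calc ‖T.ergodicAverage n x‖ ≤ (n : ℝ)⁻¹ * ∑ k ∈ range n, ‖(⇑T)^[k] x‖ := by
        rw [ergodicAverage_apply, norm_smul, norm_inv, RCLike.norm_natCast]
        gcongr
        exact norm_sum_le _ _
    _ ≤ (n : ℝ)⁻¹ * ∑ k ∈ range n, ‖x‖ := by
        gcongr with k
        exact norm_iterate_apply_le hT k x
    _ = 1 * ‖x‖ := by
        rw [sum_const, card_range, nsmul_eq_mul, ← mul_assoc, inv_mul_cancel₀ (by positivity)]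

theorem ergodicAverage_apply_of_apply_eq {x : E} (hx : T x = x) {n : ℕ} (hn : n ≠ 0) :
    T.ergodicAverage n x = x := by
  rw [ergodicAverage_apply, sum_congr rfl fun k _ => Function.iterate_fixed hx k,
    inv_natCast_smul_sum_range_const hn]

theorem apply_ergodicAverage_of_comp_eq {φ : E →L[𝕜] F} (hφ : ∀ x, φ (T x) = φ x) {n : ℕ}
    (hn : n ≠ 0) (x : E) : φ (T.ergodicAverage n x) = φ x := by
  have hiter : ∀ k, φ ((⇑T)^[k] x) = φ x := by
    intro k
    induction k with
    | zero => rfl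
    | succ k ih => rw [Function.iterate_succ_apply', hφ, ih]
  rw [ergodicAverage_apply, map_smul, map_sum, sum_congr rfl fun k _ => hiter k,
    inv_natCast_smul_sum_range_const hn]

theorem ergodicAverage_apply_map_sub (n : ℕ) (x : E) :
    T.ergodicAverage n (T x) - T.ergodicAverage n x = (n : 𝕜)⁻¹ • ((⇑T)^[n] x - x) := by
  simp only [ergodicAverage_apply, ← smul_sub, ← sum_sub_distrib, ← Function.iterate_succ_apply]
  rw [sum_range_sub (fun k => (⇑T)^[k] x)]
  rfl

theorem tendsto_ergodicAverage_apply_map_sub (hT : ‖T‖ ≤ 1) (x : E) :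
    Tendsto (fun n => T.ergodicAverage n (T x) - T.ergodicAverage n x) atTop (𝓝 0) := by
  have hbound : ∀ n : ℕ, ‖T.ergodicAverage n (T x) - T.ergodicAverage n x‖ ≤
      (n : ℝ)⁻¹ * (2 * ‖x‖) := fun n => by
    rw [ergodicAverage_apply_map_sub, norm_smul, norm_inv, RCLike.norm_natCast, two_mul]
    gcongr
    exact (norm_sub_le _ _).trans (by gcongr; exact norm_iterate_apply_le hT n x)
  refine squeeze_zero_norm hbound ?_
  simpa using tendsto_inv_atTop_nhds_zero_nat.mul_const (2 * ‖x‖)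

end ContinuousLinearMap

theorem exists_ultrafilter_le_tendsto_apply {𝕜 E ι : Type*} [NontriviallyNormedField 𝕜]
    [ProperSpace 𝕜] [NormedAddCommGroup E] [NormedSpace 𝕜 E] {L : Filter ι} [L.NeBot]
    {f : ι → StrongDual 𝕜 E} {r : ℝ} (hf : ∀ i, ‖f i‖ ≤ r) :
    ∃ U : Ultrafilter ι, ↑U ≤ L ∧
      ∃ g : StrongDual 𝕜 E, ∀ x, Tendsto (fun i => f i x) U (𝓝 (g x)) := by
  set K : Set (WeakDual 𝕜 E) := WeakDual.toStrongDual ⁻¹' Metric.closedBall 0 r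
  let U := Ultrafilter.of L
  have hUK : ↑(U.map (StrongDual.toWeakDual ∘ f)) ≤ 𝓟 K :=
    le_principal_iff.mpr <| Ultrafilter.mem_map.mpr <|
      Eventually.of_forall fun i => by simpa [K] using hf i
  obtain ⟨g, -, hg⟩ := (WeakDual.isCompact_closedBall 0 r).ultrafilter_le_nhds _ hUK
  exact ⟨U, Ultrafilter.of_le L, WeakDual.toStrongDual g,
    fun x => ((WeakDual.eval_continuous x).tendsto g).comp hg⟩

section States

variable {A : Type*} [CStarAlgebra A]

def IsState (φ : A →L[ℂ] ℂ) : Prop := φ 1 = 1 ∧ ∀ a, 0 ≤ φ (star a * a)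

def IsInvariantState (T : A →L[ℂ] A) (φ : A →L[ℂ] ℂ) : Prop := IsState φ ∧ ∀ a, φ (T a) = φ a

theorem sq_norm_add_I_smul_one_le {x : A} (hx : IsSelfAdjoint x) (t : ℝ) :
    ‖x + (t * I) • (1 : A)‖ ^ 2 ≤ ‖x‖ ^ 2 + t ^ 2 := by
  have hmul : star (x + (t * I) • (1 : A)) * (x + (t * I) • 1) = x * x + (t ^ 2 : ℂ) • 1 := by
    simp only [star_add, hx.star_eq, star_smul, star_one, star_mul', Complex.star_def,
      conj_ofReal, conj_I, add_mul, mul_add, smul_mul_assoc, mul_smul_comm, one_mul, mul_one]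
    match_scalars <;> ring_nf; simp [I_sq]
  calc ‖x + (t * I) • (1 : A)‖ ^ 2 = ‖x * x + (t ^ 2 : ℂ) • (1 : A)‖ := by
        rw [← hmul, CStarRing.norm_star_mul_self, sq]
    _ ≤ ‖x‖ ^ 2 + t ^ 2 := by
        refine (norm_add_le _ _).trans (add_le_add ?_ ?_)
        · rw [sq]; exact norm_mul_le x x
        · rcases subsingleton_or_nontrivial A with _ | _
          · simp [Subsingleton.elim ((t ^ 2 : ℂ) • (1 : A)) 0, sq_nonneg]
          · simp [norm_smul]

theorem im_apply_eq_zero_of_isSelfAdjoint {g : A →L[ℂ] ℂ} (hg : ‖g‖ ≤ 1) (h1 : g 1 = 1)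
    {x : A} (hx : IsSelfAdjoint x) : (g x).im = 0 := by
  -- `|g x + t i|² ≤ ‖x‖² + t²` for every real `t` forces `Im (g x) = 0`
  have key : ∀ t : ℝ, 2 * (g x).im * t ≤ ‖x‖ ^ 2 - (g x).re ^ 2 - (g x).im ^ 2 := fun t => by
    have hgt : ‖g (x + (t * I) • 1)‖ ^ 2 = (g x).re ^ 2 + ((g x).im + t) ^ 2 := by
      rw [map_add, map_smul, h1, smul_eq_mul, mul_one, Complex.sq_norm, normSq_apply]
      simp only [add_re, add_im, mul_re, mul_im, ofReal_re, ofReal_im, I_re, I_im]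
      ring
    have hle : ‖g (x + (t * I) • 1)‖ ^ 2 ≤ ‖x‖ ^ 2 + t ^ 2 := by
      grw [g.le_of_opNorm_le hg, one_mul, sq_norm_add_I_smul_one_le hx]
    nlinarith
  by_contra him
  have := key ((‖x‖ ^ 2 + 1) / (2 * (g x).im))
  rw [mul_div_cancel₀ _ (by positivity)] at this
  nlinarith

theorem isState_of_norm_le_one {g : A →L[ℂ] ℂ} (hg : ‖g‖ ≤ 1) (h1 : g 1 = 1) : IsState g := by
  refine ⟨h1, fun a => ?_⟩
  set b := star a * a
  have hb : IsSelfAdjoint b := .star_mul_self a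
  -- the spectrum of `b` lies in `[0, ‖b‖]`, so `g b` lies in the disc of radius `‖b‖` around `‖b‖`
  have hdist : ‖g b - ‖b‖‖ ≤ ‖b‖ := by
    have hspec : ‖algebraMap ℝ A ‖b‖ - b‖₊ ≤ ‖b‖₊ :=
      (SpectrumRestricts.nnreal_iff_nnnorm hb le_rfl).mp
        (SpectrumRestricts.nnreal_iff.mpr spectrum_star_mul_self_nonneg)
    have hg' : g (algebraMap ℝ A ‖b‖ - b) = ‖b‖ - g b := by
      simp [Algebra.algebraMap_eq_smul_one, h1]
    rw [← norm_neg, neg_sub, ← hg']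
    exact (g.le_of_opNorm_le hg _).trans (by rw [one_mul]; exact_mod_cast hspec)
  refine Complex.le_def.mpr ⟨?_, (im_apply_eq_zero_of_isSelfAdjoint hg h1 hb).symm⟩
  have := (Complex.abs_re_le_norm (g b - ‖b‖)).trans hdist
  rw [sub_re, ofReal_re, abs_le] at this
  simpa using this.1

theorem exists_norm_le_one_apply_one_norm_apply_eq [Nontrivial A] {h : A} (hh : IsSelfAdjoint h) :
    ∃ g : A →L[ℂ] ℂ, ‖g‖ ≤ 1 ∧ g 1 = 1 ∧ ‖g h‖ = ‖h‖ := by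
  have : IsStarNormal h := hh.isStarNormal
  set S := StarAlgebra.elemental ℂ h
  let c : S := ⟨h, StarAlgebra.elemental.self_mem ℂ h⟩
  obtain ⟨z, hz, hz_norm⟩ := spectrum.exists_nnnorm_eq_spectralRadius c
  obtain ⟨f, rfl⟩ := WeakDual.CharacterSpace.mem_spectrum_iff_exists.mp hz
  let f' : StrongDual ℂ S := WeakDual.toStrongDual (f : WeakDual ℂ S)
  have hf : ‖f'‖ ≤ 1 := ContinuousLinearMap.opNorm_le_bound _ zero_le_one fun x => by
    rw [one_mul]
    exact spectrum.norm_le_norm_of_mem (WeakDual.CharacterSpace.apply_mem_spectrum f x)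
  obtain ⟨g, hgf, hg⟩ := exists_extension_norm_eq (Subalgebra.toSubmodule S.toSubalgebra) f'
  refine ⟨g, hg ▸ hf, ?_, ?_⟩
  · exact (hgf ⟨1, one_mem S⟩).trans (map_one f)
  · rw [hgf c]
    have hc : IsSelfAdjoint c := Subtype.ext hh.star_eq
    rw [hc.spectralRadius_eq_nnnorm, ENNReal.coe_inj] at hz_norm
    exact congrArg NNReal.toReal hz_norm

theorem norm_apply_realPart_le_and_norm_apply_imaginaryPart_le {g : A →L[ℂ] ℂ} (hg : ‖g‖ ≤ 1)
    (h1 : g 1 = 1) (b : A) : ‖g (ℜ b)‖ ≤ ‖g b‖ ∧ ‖g (ℑ b)‖ ≤ ‖g b‖ := by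
  have hre := im_apply_eq_zero_of_isSelfAdjoint hg h1 (ℜ b).2
  have him := im_apply_eq_zero_of_isSelfAdjoint hg h1 (ℑ b).2
  have hgb : g b = g (ℜ b) + I * g (ℑ b) := by
    conv_lhs => rw [← realPart_add_I_smul_imaginaryPart b]
    rw [map_add, map_smul, smul_eq_mul]
  constructor
  · calc ‖g (ℜ b)‖ = |(g b).re| := by simp [hgb, him, ← abs_re_eq_norm.mpr hre]
      _ ≤ ‖g b‖ := abs_re_le_norm _
  · calc ‖g (ℑ b)‖ = |(g b).im| := by simp [hgb, hre, ← abs_re_eq_norm.mpr him]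
      _ ≤ ‖g b‖ := abs_im_le_norm _

theorem exists_norm_le_one_apply_one_norm_le_two_mul [Nontrivial A] (b : A) :
    ∃ g : A →L[ℂ] ℂ, ‖g‖ ≤ 1 ∧ g 1 = 1 ∧ ‖b‖ ≤ 2 * ‖g b‖ := by
  have hb : ‖b‖ ≤ ‖(ℜ b : A)‖ + ‖(ℑ b : A)‖ := by
    conv_lhs => rw [← realPart_add_I_smul_imaginaryPart b]
    exact (norm_add_le _ _).trans (by rw [norm_smul, norm_I, one_mul])
  rcases le_total ‖(ℑ b : A)‖ ‖(ℜ b : A)‖ with hle | hle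
  · obtain ⟨g, hg, h1, hgh⟩ := exists_norm_le_one_apply_one_norm_apply_eq (ℜ b).2
    have := (norm_apply_realPart_le_and_norm_apply_imaginaryPart_le hg h1 b).1
    exact ⟨g, hg, h1, by linarith⟩
  · obtain ⟨g, hg, h1, hgh⟩ := exists_norm_le_one_apply_one_norm_apply_eq (ℑ b).2
    have := (norm_apply_realPart_le_and_norm_apply_imaginaryPart_le hg h1 b).2
    exact ⟨g, hg, h1, by linarith⟩

variable {T : A →L[ℂ] A}

theorem isInvariantState_of_tendsto (hT : ‖T‖ ≤ 1) (hT1 : T 1 = 1) {L : Filter ℕ} [L.NeBot]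
    (hL : L ≤ atTop) {ρ : ℕ → A →L[ℂ] ℂ} (hρ : ∀ n, ‖ρ n‖ ≤ 1) (hρ1 : ∀ n, ρ n 1 = 1)
    {ψ : A →L[ℂ] ℂ} (hψ : ∀ x, Tendsto (fun n => ρ n (T.ergodicAverage n x)) L (𝓝 (ψ x))) :
    IsInvariantState T ψ := by
  have hψ_norm : ‖ψ‖ ≤ 1 := ContinuousLinearMap.opNorm_le_bound _ zero_le_one fun x =>
    le_of_tendsto (hψ x).norm <| Eventually.of_forall fun n =>
      ((ρ n).le_of_opNorm_le (hρ n) _).trans <| by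
        grw [one_mul, (T.ergodicAverage n).le_of_opNorm_le
          (ContinuousLinearMap.norm_ergodicAverage_le hT n)]
  have hψ1 : ψ 1 = 1 := by
    refine tendsto_nhds_unique (hψ 1) (tendsto_const_nhds.congr' ?_)
    filter_upwards [hL (eventually_ne_atTop 0)] with n hn
    rw [ContinuousLinearMap.ergodicAverage_apply_of_apply_eq hT1 hn, hρ1]
  refine ⟨isState_of_norm_le_one hψ_norm hψ1, fun x => sub_eq_zero.mp ?_⟩
  have hsmall : Tendsto (fun n => ‖T.ergodicAverage n (T x) - T.ergodicAverage n x‖) L (𝓝 0) := by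
    simpa using (ContinuousLinearMap.tendsto_ergodicAverage_apply_map_sub hT x).norm.mono_left hL
  refine tendsto_nhds_unique ((hψ (T x)).sub (hψ x)) (squeeze_zero_norm (fun n => ?_) hsmall)
  rw [← map_sub]
  exact ((ρ n).le_of_opNorm_le (hρ n) _).trans_eq (one_mul _)

theorem exists_isInvariantState [Nontrivial A] (hT : ‖T‖ ≤ 1) (hT1 : T 1 = 1) :
    ∃ φ, IsInvariantState T φ := by
  obtain ⟨ρ, hρ, hρ1⟩ := exists_dual_vector' ℂ (1 : A)
  replace hρ1 : ρ 1 = 1 := by simpa using hρ1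
  have hbound : ∀ n, ‖ρ.comp (T.ergodicAverage n)‖ ≤ 1 := fun n =>
    (ρ.opNorm_comp_le _).trans <| by
      grw [hρ, ContinuousLinearMap.norm_ergodicAverage_le hT, one_mul]
  obtain ⟨U, hU, ψ, hψ⟩ := exists_ultrafilter_le_tendsto_apply (L := atTop) hbound
  exact ⟨ψ, isInvariantState_of_tendsto hT hT1 hU (fun _ => hρ.le) (fun _ => hρ1) hψ⟩

theorem IsInvariantState.apply_eq_of_tendsto {φ : A →L[ℂ] ℂ} (hφ : IsInvariantState T φ)
    {a : A} {c : ℂ} (h : Tendsto (fun n => T.ergodicAverage n a) atTop (𝓝 (c • 1))) :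
    φ a = c := by
  have hlim := (φ.continuous.tendsto _).comp h
  rw [map_smul, hφ.1.1, smul_eq_mul, mul_one] at hlim
  refine tendsto_nhds_unique (tendsto_const_nhds.congr' ?_) hlim
  filter_upwards [eventually_ne_atTop 0] with n hn
  exact (ContinuousLinearMap.apply_ergodicAverage_of_comp_eq hφ.2 hn a).symm

theorem existsUnique_isInvariantState_of_tendsto [Nontrivial A] (hT : ‖T‖ ≤ 1) (hT1 : T 1 = 1)
    (h : ∀ a, ∃ c : ℂ, Tendsto (fun n => T.ergodicAverage n a) atTop (𝓝 (c • 1))) :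
    ∃! φ, IsInvariantState T φ := by
  obtain ⟨φ, hφ⟩ := exists_isInvariantState hT hT1
  refine ⟨φ, hφ, fun ψ hψ => ContinuousLinearMap.ext fun a => ?_⟩
  obtain ⟨c, hc⟩ := h a
  rw [hψ.apply_eq_of_tendsto hc, hφ.apply_eq_of_tendsto hc]

theorem tendsto_ergodicAverage_of_forall_isInvariantState_eq [Nontrivial A] (hT : ‖T‖ ≤ 1)
    (hT1 : T 1 = 1) {φ : A →L[ℂ] ℂ} (huniq : ∀ ψ, IsInvariantState T ψ → ψ = φ) (a : A) :
    Tendsto (fun n => T.ergodicAverage n a) atTop (𝓝 (φ a • 1)) := by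
  by_contra hcon
  obtain ⟨ε, hε, hfreq⟩ : ∃ ε > 0, ∃ᶠ n in atTop, ε ≤ ‖T.ergodicAverage n a - φ a • 1‖ := by
    simpa [Metric.tendsto_atTop, frequently_atTop, dist_eq_norm] using hcon
  set L := atTop ⊓ 𝓟 {n | ε ≤ ‖T.ergodicAverage n a - φ a • 1‖}
  have : L.NeBot := frequently_iff_neBot.mp hfreq
  choose ρ hρ hρ1 hρb using fun n =>
    exists_norm_le_one_apply_one_norm_le_two_mul (T.ergodicAverage n a - φ a • 1)
  have hbound : ∀ n, ‖(ρ n).comp (T.ergodicAverage n)‖ ≤ 1 := fun n =>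
    ((ρ n).opNorm_comp_le _).trans <| by
      grw [hρ n, ContinuousLinearMap.norm_ergodicAverage_le hT, one_mul]
  obtain ⟨U, hU, ψ, hψ⟩ := exists_ultrafilter_le_tendsto_apply (L := L) hbound
  have hψφ : ψ = φ :=
    huniq ψ (isInvariantState_of_tendsto hT hT1 (hU.trans inf_le_left) hρ hρ1 hψ)
  have hfar : ∀ᶠ n in U, ε / 2 ≤ ‖ρ n (T.ergodicAverage n a) - φ a‖ := by
    filter_upwards [hU (inf_le_right (a := atTop) (mem_principal_self _))] with n hn
    have : ρ n (T.ergodicAverage n a) - φ a = ρ n (T.ergodicAverage n a - φ a • 1) := by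
      rw [map_sub, map_smul, hρ1, smul_eq_mul, mul_one]
    rw [this]
    linarith [hρb n, show ε ≤ _ from hn]
  have := ge_of_tendsto ((hψ a).sub_const (φ a)).norm hfar
  rw [hψφ, sub_self, norm_zero] at this
  linarith

end States

/-- A *-automorphism `α` of a unital C*-algebra is uniquely ergodic (has exactly
one invariant state) if and only if all ergodic averages converge in norm to scalar multiples
of the identity; moreover, in this case the averages of `a` converge to `φ(a) • 1` where `φ`
is the unique invariant state. -/
theorem uniquely_ergodic_iff_ergodic_averages_scalar {A : Type*} [NormedRing A] [StarRing A]
    [CStarRing A] [NormedAlgebra ℂ A] [CompleteSpace A] [StarModule ℂ A] [Nontrivial A]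
    (α : A ≃⋆ₐ[ℂ] A) :
    ((∃! φ : A →L[ℂ] ℂ,
        (φ 1 = 1 ∧ ∀ a : A, 0 ≤ φ (star a * a)) ∧ ∀ a : A, φ (α a) = φ a) ↔
      (∀ a : A, ∃ c : ℂ,
        Tendsto (fun n : ℕ => (n : ℂ)⁻¹ • ∑ k ∈ Finset.range n, (⇑α)^[k] a) atTop
          (𝓝 (c • (1 : A))))) ∧
    ((∃! φ : A →L[ℂ] ℂ,
        (φ 1 = 1 ∧ ∀ a : A, 0 ≤ φ (star a * a)) ∧ ∀ a : A, φ (α a) = φ a) →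
      ∀ φ : A →L[ℂ] ℂ,
        ((φ 1 = 1 ∧ ∀ a : A, 0 ≤ φ (star a * a)) ∧ ∀ a : A, φ (α a) = φ a) →
        ∀ a : A,
          Tendsto (fun n : ℕ => (n : ℂ)⁻¹ • ∑ k ∈ Finset.range n, (⇑α)^[k] a) atTop
            (𝓝 (φ a • (1 : A)))) := by
  let _ : CStarAlgebra A := {}
  let T : A →L[ℂ] A := ⟨α.toAlgEquiv.toLinearMap, (StarAlgEquiv.isometry α).continuous⟩
  have hT : ‖T‖ ≤ 1 := T.opNorm_le_bound zero_le_one fun a =>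
    (StarAlgEquiv.norm_map α a).trans_le (one_mul _).ge
  have hT1 : T 1 = 1 := map_one α
  change ((∃! φ, IsInvariantState T φ) ↔ _) ∧ ((∃! φ, IsInvariantState T φ) →
    ∀ φ, IsInvariantState T φ → _)
  have hT_avg : ∀ (n : ℕ) a, (n : ℂ)⁻¹ • ∑ k ∈ range n, (⇑α)^[k] a = T.ergodicAverage n a :=
    fun n a => (T.ergodicAverage_apply n a).symm
  simp only [hT_avg]
  refine ⟨⟨fun ⟨φ, _, huniq⟩ a => ⟨φ a, ?_⟩, existsUnique_isInvariantState_of_tendsto hT hT1⟩,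
    fun ⟨φ₀, _, huniq⟩ φ hφ => ?_⟩
  · exact tendsto_ergodicAverage_of_forall_isInvariantState_eq hT hT1 huniq a
  · exact tendsto_ergodicAverage_of_forall_isInvariantState_eq hT hT1
      fun ψ hψ => (huniq ψ hψ).trans (huniq φ hφ).symm
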